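/- arXiv:1410.7028 — 2 statements merged into one kernel-verified Lean document; each statement's English description precedes it below -/
import Mathlib

section
/- Let k be an algebraically closed field of characteristic zero and n ≥ 4. Then the Virasoro algebra Vir over k is a quotient of the Yang–Mills algebra ym(n). Equivalently, there exists a surjective Lie algebra morphism φ from the free Lie algebra over k on generators x_1, …, x_n onto Vir such that φ(r_j) = 0 for all j = 1, …, n. -/
/-!
Send `x₁, x₂, x₃, x₄` to `e₂, i e₂, e₋₃, i e₋₃` (with `i² = -1`) and the remaining generators to
`0`. Since `ad (i a) ^ 2 = - ad a ^ 2`, the two members of each pair cancel in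
`∑ᵢ ad (xᵢ) ^ 2`, so every Yang–Mills relation is killed. The map is onto because `e₂` and
`e₋₃` generate `Vir`: for `m + n ≠ 0` and `m ≠ n` the bracket `[eₙ, eₘ] = (m - n) e_{m+n}` is a
nonzero multiple of `e_{m+n}` in characteristic zero, which reaches `e₋₁, e₁, e₋₂` and then every
`e_{±j}` one step at a time, while `e₀` and `c` come from `[e₁, e₋₁]` and `[e₂, e₋₂]`.
-/

open FreeLieAlgebra

/-- The Yang–Mills relation `r j = ∑ i [xᵢ,[xᵢ,xⱼ]]` in the free Lie algebra on `n`
generators over `k`. -/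
noncomputable def ymRel (k : Type*) [Field k] (n : ℕ) (j : Fin n) :
    FreeLieAlgebra k (Fin n) :=
  ∑ i : Fin n, ⁅of k i, ⁅of k i, of k j⁆⁆

/-- A Lie algebra `V` over `k` is (a realization of) the Virasoro algebra when it has a
basis `{eₙ}_{n ∈ ℤ} ∪ {c}` (indexed by `Option ℤ`, with `some n ↦ eₙ` and `none ↦ c`) with
brackets `[eₙ, eₘ] = (m − n) e_{m+n} + δ_{m+n,0} (m³ − m)/12 · c` and `[eₙ, c] = 0`. -/
def IsVirasoro (k : Type*) [Field k] (V : Type*) [LieRing V] [LieAlgebra k V]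
    (b : Module.Basis (Option ℤ) k V) : Prop :=
  (∀ m n : ℤ, ⁅b (some n), b (some m)⁆ =
      ((m : k) - (n : k)) • b (some (m + n)) +
      (if m + n = 0 then (((m : k) ^ 3 - (m : k)) / 12) else 0) • b none) ∧
  ∀ n : ℤ, ⁅b (some n), b none⁆ = 0

section YangMills

variable {R : Type*} [CommRing R] {L : Type*} [LieRing L] [LieAlgebra R L]

lemma lift_ymRel {k : Type*} [Field k] {V : Type*} [LieRing V] [LieAlgebra k V] {n : ℕ}
    (f : Fin n → V) (j : Fin n) :
    lift k f (ymRel k n j) = ∑ i, ⁅f i, ⁅f i, f j⁆⁆ := by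
  simp [ymRel, lift_of_apply]

lemma lie_lie_add_lie_smul_lie_smul {I : R} (hI : I * I = -1) (a y : L) :
    ⁅a, ⁅a, y⁆⁆ + ⁅I • a, ⁅I • a, y⁆⁆ = 0 := by
  simp only [smul_lie, lie_smul, smul_smul, hI, neg_one_smul, add_neg_cancel]

def pairedGens (I : R) (a c : L) : ℕ → L
  | 0 => a
  | 1 => I • a
  | 2 => c
  | 3 => I • c
  | _ + 4 => 0

lemma sum_lie_pairedGens_lie_pairedGens {I : R} (hI : I * I = -1) (a c : L) {n : ℕ}
    (hn : 4 ≤ n) (y : L) :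
    ∑ i : Fin n, ⁅pairedGens I a c i, ⁅pairedGens I a c i, y⁆⁆ = 0 := by
  obtain ⟨m, rfl⟩ := Nat.exists_eq_add_of_le' hn
  rw [Fin.sum_univ_eq_sum_range (fun i => ⁅pairedGens I a c i, ⁅pairedGens I a c i, y⁆⁆),
    add_comm, Finset.sum_range_add]
  have hpairs : ∑ i ∈ Finset.range 4, ⁅pairedGens I a c i, ⁅pairedGens I a c i, y⁆⁆ = 0 := by
    simp only [Finset.sum_range_succ, Finset.sum_range_zero, zero_add, pairedGens]
    rw [lie_lie_add_lie_smul_lie_smul hI, add_assoc, lie_lie_add_lie_smul_lie_smul hI, add_zero]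
  rw [hpairs, zero_add]
  exact Finset.sum_eq_zero fun i _ => by rw [add_comm]; simp [pairedGens]

end YangMills

namespace IsVirasoro

variable {k : Type*} [Field k] {V : Type*} [LieRing V] [LieAlgebra k V]
  {b : Module.Basis (Option ℤ) k V}

lemma lie_of_add_ne_zero (hV : IsVirasoro k V b) {m n : ℤ} (h : m + n ≠ 0) :
    ⁅b (some n), b (some m)⁆ = ((m : k) - n) • b (some (m + n)) := by
  rw [hV.1, if_neg h, zero_smul, add_zero]

variable [CharZero k] {S : LieSubalgebra k V}

lemma basis_add_mem (hV : IsVirasoro k V b) {m n p : ℤ} (hp : m + n = p) (hmn : m ≠ n)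
    (h : p ≠ 0) (hm : b (some m) ∈ S) (hn : b (some n) ∈ S) : b (some p) ∈ S := by
  subst hp
  have hne : (m : k) - n ≠ 0 := sub_ne_zero.mpr (Int.cast_injective.ne hmn)
  have : b (some (m + n)) = ((m : k) - n)⁻¹ • ⁅b (some n), b (some m)⁆ := by
    rw [hV.lie_of_add_ne_zero h, inv_smul_smul₀ hne]
  rw [this]
  exact S.smul_mem _ (S.lie_mem hn hm)

lemma basis_mul_mem (hV : IsVirasoro k V b) {s : ℤ} (hs : s ≠ 0)
    (h₁ : b (some s) ∈ S) (h₂ : b (some (2 * s)) ∈ S) {j : ℕ} (hj : 1 ≤ j) :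
    b (some (j * s)) ∈ S := by
  obtain rfl | hj₂ := hj.eq_or_lt
  · simpa using h₁
  clear hj
  induction j, hj₂ using Nat.le_induction with
  | base => exact_mod_cast h₂
  | succ j hj ih =>
    have hjs : (j : ℤ) * s + s = ((j + 1 : ℕ) : ℤ) * s := by push_cast; ring
    refine hV.basis_add_mem hjs ?_ ?_ ih h₁
    · intro h
      have : (j : ℤ) = 1 := mul_right_cancel₀ hs (h.trans (one_mul s).symm)
      omega
    · exact mul_ne_zero (by omega) hs

lemma basis_zero_mem (hV : IsVirasoro k V b) (h₁ : b (some 1) ∈ S) (hm₁ : b (some (-1)) ∈ S) :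
    b (some 0) ∈ S := by
  have hbr : ⁅b (some 1), b (some (-1))⁆ = (-2 : k) • b (some 0) := by
    rw [hV.1]; norm_num
  have : b (some 0) = (-2 : k)⁻¹ • ⁅b (some 1), b (some (-1))⁆ := by
    rw [hbr, inv_smul_smul₀ (by norm_num)]
  rw [this]
  exact S.smul_mem _ (S.lie_mem h₁ hm₁)

lemma basis_none_mem (hV : IsVirasoro k V b) (h₀ : b (some 0) ∈ S) (h₂ : b (some 2) ∈ S)
    (hm₂ : b (some (-2)) ∈ S) : b none ∈ S := by
  have hbr : ⁅b (some 2), b (some (-2))⁆ = (-4 : k) • b (some 0) - (2⁻¹ : k) • b none := by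
    rw [hV.1]; norm_num; module
  have : b none = (-2 : k) • (⁅b (some 2), b (some (-2))⁆ + (4 : k) • b (some 0)) := by
    rw [hbr]; module
  rw [this]
  exact S.smul_mem _ (S.add_mem (S.lie_mem h₂ hm₂) (S.smul_mem _ h₀))

lemma eq_top_of_basis_two_mem_of_basis_neg_three_mem (hV : IsVirasoro k V b) (h₂ : b (some 2) ∈ S)
    (hm₃ : b (some (-3)) ∈ S) : S = ⊤ := by
  have hm₁ : b (some (-1)) ∈ S :=
    hV.basis_add_mem (by norm_num) (by norm_num) (by norm_num) hm₃ h₂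
  have h₁ : b (some 1) ∈ S :=
    hV.basis_add_mem (by norm_num) (by norm_num) (by norm_num) hm₁ h₂
  have hm₂ : b (some (-2)) ∈ S :=
    hV.basis_add_mem (by norm_num) (by norm_num) (by norm_num) hm₃ h₁
  have h₀ := hV.basis_zero_mem h₁ hm₁
  have hall : ∀ o, b o ∈ S := by
    rintro (_ | m)
    · exact hV.basis_none_mem h₀ h₂ hm₂
    obtain ⟨j, rfl | rfl⟩ := Int.eq_nat_or_neg m
    all_goals obtain rfl | hj := (Nat.zero_le j).eq_or_lt
    · exact h₀
    · simpa using hV.basis_mul_mem one_ne_zero h₁ h₂ hj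
    · exact h₀
    · simpa using hV.basis_mul_mem (by norm_num) hm₁ hm₂ hj
  rw [← LieSubalgebra.toSubmodule_eq_top, eq_top_iff, ← b.span_eq, Submodule.span_le]
  rintro _ ⟨o, rfl⟩
  exact hall o

end IsVirasoro

/-- For `n ≥ 4`, the Virasoro algebra `Vir` over `k` is a quotient of the Yang–Mills algebra
`ym(n)`: there is a surjective Lie algebra morphism from the free Lie algebra on `n`
generators onto `Vir` killing all the Yang–Mills relations. -/
theorem virasoro_quotient_of_yangMills (k : Type*) [Field k] [IsAlgClosed k] [CharZero k]
    (n : ℕ) (hn : 4 ≤ n)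
    (V : Type*) [LieRing V] [LieAlgebra k V] (b : Module.Basis (Option ℤ) k V)
    (hV : IsVirasoro k V b) :
    ∃ φ : FreeLieAlgebra k (Fin n) →ₗ⁅k⁆ V,
      Function.Surjective φ ∧ ∀ j : Fin n, φ (ymRel k n j) = 0 := by
  obtain ⟨I, hI⟩ := IsAlgClosed.exists_pow_nat_eq (-1 : k) two_pos
  let f (i : Fin n) : V := pairedGens I (b (some 2)) (b (some (-3))) i
  have hf_mem (i : Fin n) : f i ∈ (lift k f).range := ⟨of k i, lift_of_apply f i⟩
  refine ⟨lift k f, ?_, fun j => ?_⟩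
  · rw [← LieHom.range_eq_top]
    exact hV.eq_top_of_basis_two_mem_of_basis_neg_three_mem
      (hf_mem ⟨0, by omega⟩) (hf_mem ⟨2, by omega⟩)
  · rw [lift_ymRel]
    exact sum_lie_pairedGens_lie_pairedGens (by rw [← sq, hI]) _ _ hn _
end

section
/- Let k be a field of characteristic zero. The Witt algebra over k is generated, as a Lie algebra, by the two elements e_{−2} and e_3, where e_n = z^{n+1} d/dz; that is, the smallest Lie subalgebra of the Lie algebra of k-linear derivations of k[z, z⁻¹] containing e_{−2} and e_3 is the span of {e_n}_{n ∈ ℤ}, the whole Witt algebra. -/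
/-!
The relations `⁅e n, e m⁆ = (m - n) • e (n + m)` produce `e (n + m)` from `e n` and `e m` whenever
`n ≠ m`. Starting from `e (-2)` and `e 3` this gives `e 1`, then `e (-1)`, `e 0`, `e 2`, and
bracketing repeatedly with `e 1` (resp. `e (-1)`) reaches every larger (resp. smaller) index.
Conversely a derivation `D` of `k[z, z⁻¹]` is determined by `D z`, since `z` is a unit generating
the algebra; hence `D = D z • d/dz`, and writing `D z = ∑ cᵢ zⁱ` gives `D = ∑ cᵢ e (i - 1)`.
-/

open LaurentPolynomial

namespace LaurentPolynomial

variable {R M : Type*}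

theorem derivation_ext [CommSemiring R] [AddCommMonoid M] [Module R[T;T⁻¹] M] [Module R M]
    {D₁ D₂ : Derivation R R[T;T⁻¹] M} (h : ∀ n : ℤ, D₁ (T n) = D₂ (T n)) : D₁ = D₂ := by
  have : D₁.toLinearMap = D₂.toLinearMap :=
    AddMonoidAlgebra.lhom_ext' fun n => LinearMap.ext_ring (h n)
  exact Derivation.ext (LinearMap.congr_fun this)

theorem derivation_ext_of_T_one [CommRing R] [AddCommGroup M] [Module R[T;T⁻¹] M] [Module R M]
    {D₁ D₂ : Derivation R R[T;T⁻¹] M} (h : D₁ (T 1) = D₂ (T 1)) : D₁ = D₂ := by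
  have hinv : D₁ (T (-1)) = D₂ (T (-1)) := by
    have hT : (T (-1) * T 1 : R[T;T⁻¹]) = 1 := by rw [← T_add, neg_add_cancel, T_zero]
    rw [D₁.leibniz_of_mul_eq_one hT, D₂.leibniz_of_mul_eq_one hT, h]
  refine derivation_ext fun n => ?_
  obtain ⟨m, rfl | rfl⟩ := Int.eq_nat_or_neg n
  · rw [← mul_one (m : ℤ), ← T_pow, D₁.leibniz_pow, D₂.leibniz_pow, h]
  · rw [← mul_neg_one, ← T_pow, D₁.leibniz_pow, D₂.leibniz_pow, hinv]

end LaurentPolynomial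

section WittDerivations

variable {R : Type*} [CommRing R] {e : ℤ → Derivation R R[T;T⁻¹] R[T;T⁻¹]}
  (he : ∀ n m : ℤ, e n (T m) = (m : R) • T (m + n))
include he

theorem lie_witt (n m : ℤ) : ⁅e n, e m⁆ = ((m - n : ℤ) : R) • e (n + m) := by
  refine derivation_ext_of_T_one ?_
  rw [Derivation.commutator_apply, Derivation.smul_apply, he, he, Derivation.map_smul,
    Derivation.map_smul, he, he, he, smul_smul, smul_smul, add_right_comm, add_assoc 1 n m,
    ← sub_smul, Int.cast_one, one_smul]
  push_cast
  ring_nf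

theorem witt_eq_T_smul (n : ℤ) : e n = (T (n + 1) : R[T;T⁻¹]) • e (-1) := by
  refine derivation_ext_of_T_one ?_
  rw [Derivation.smul_apply, he, he]
  simp [add_comm]

theorem T_smul_witt_mem_span (f : R[T;T⁻¹]) : f • e (-1) ∈ Submodule.span R (Set.range e) := by
  induction f using LaurentPolynomial.induction_on' with
  | add p q hp hq => rw [add_smul]; exact add_mem hp hq
  | C_mul_T n a =>
    rw [← smul_eq_C_mul, smul_assoc, ← sub_add_cancel n 1, ← witt_eq_T_smul he]
    exact Submodule.smul_mem _ _ (Submodule.subset_span ⟨_, rfl⟩)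

theorem span_range_witt_eq_top : Submodule.span R (Set.range e) = ⊤ := by
  refine Submodule.eq_top_iff'.mpr fun D => ?_
  have hD : D = D (T 1) • e (-1) := by
    refine derivation_ext_of_T_one ?_
    simp [Derivation.smul_apply, he]
  rw [hD]
  exact T_smul_witt_mem_span he _

end WittDerivations

section WittRelations

variable {k L : Type*} [Field k] [CharZero k] [LieRing L] [LieAlgebra k L] {e : ℤ → L}
  (he : ∀ n m : ℤ, ⁅e n, e m⁆ = ((m - n : ℤ) : k) • e (n + m))
include he

theorem LieSubalgebra.witt_add_mem (S : LieSubalgebra k L) {n m : ℤ} (hn : e n ∈ S)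
    (hm : e m ∈ S) (hnm : n ≠ m) : e (n + m) ∈ S := by
  have hc : ((m - n : ℤ) : k) ≠ 0 := Int.cast_ne_zero.mpr (sub_ne_zero.mpr hnm.symm)
  have := S.smul_mem ((m - n : ℤ) : k)⁻¹ (S.lie_mem hn hm)
  rwa [he, smul_smul, inv_mul_cancel₀ hc, one_smul] at this

theorem witt_mem_lieSpan_neg_two_three (n : ℤ) :
    e n ∈ LieSubalgebra.lieSpan k L {e (-2), e 3} := by
  set S := LieSubalgebra.lieSpan k L {e (-2), e 3}
  have hm2 : e (-2) ∈ S := LieSubalgebra.subset_lieSpan (by simp)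
  have h3 : e 3 ∈ S := LieSubalgebra.subset_lieSpan (by simp)
  have h1 : e 1 ∈ S := S.witt_add_mem he hm2 h3 (by norm_num)
  have hm1 : e (-1) ∈ S := S.witt_add_mem he hm2 h1 (by norm_num)
  have h0 : e 0 ∈ S := S.witt_add_mem he hm1 h1 (by norm_num)
  have h2 : e 2 ∈ S := S.witt_add_mem he hm1 h3 (by norm_num)
  have mem_of_le : ∀ n ≤ -2, e n ∈ S := fun n hn => by
    induction n, hn using Int.leInductionDown with
    | base => exact hm2
    | pred n hn ih => simpa [sub_eq_neg_add] using S.witt_add_mem he hm1 ih (by omega)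
  have mem_of_ge : ∀ n ≥ 2, e n ∈ S := fun n hn => by
    induction n, hn using Int.leInduction with
    | base => exact h2
    | succ n hn ih => simpa [add_comm] using S.witt_add_mem he h1 ih (by omega)
  rcases le_or_gt n (-2) with hn | hn
  · exact mem_of_le n hn
  rcases le_or_gt 2 n with hn' | hn'
  · exact mem_of_ge n hn'
  interval_cases n
  exacts [hm1, h0, h1]

end WittRelations

/-- The Witt algebra (the Lie algebra of `k`-linear derivations of `k[z,z⁻¹]`) is generated,
as a Lie algebra, by `e₋₂` and `e₃`, where `eₙ = z^{n+1} d/dz` is the derivation determined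
by `eₙ(z^m) = m z^{m+n}`: the smallest Lie subalgebra containing `e₋₂` and `e₃` is the span
of `{eₙ}_{n ∈ ℤ}`, which is the whole Witt algebra. -/
theorem witt_generated_by_two_elements (k : Type*) [Field k] [CharZero k]
    (e : ℤ → Derivation k (LaurentPolynomial k) (LaurentPolynomial k))
    (he : ∀ n m : ℤ, e n (LaurentPolynomial.T m) = (m : k) • LaurentPolynomial.T (m + n)) :
    (LieSubalgebra.lieSpan k
        (Derivation k (LaurentPolynomial k) (LaurentPolynomial k))
        {e (-2), e 3}).toSubmodule = Submodule.span k (Set.range e) ∧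
      Submodule.span k (Set.range e) = ⊤ := by
  have hspan : Submodule.span k (Set.range e) = ⊤ := span_range_witt_eq_top he
  have hle : Submodule.span k (Set.range e) ≤
      (LieSubalgebra.lieSpan k _ {e (-2), e 3}).toSubmodule :=
    Submodule.span_le.mpr <| Set.range_subset_iff.mpr <|
      witt_mem_lieSpan_neg_two_three (lie_witt he)
  exact ⟨le_antisymm (hspan ▸ le_top) hle, hspan⟩
end
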